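/- arXiv:1706.09136 — 5 statements merged into one kernel-verified Lean document; each statement's English description precedes it below -/
import Mathlib

section
/- For every prime p, \sum_{0 < n_1 < n_2 < p} 1/(n_1 n_2^3) \equiv 0 \pmod p and \sum_{0 < n_1 < n_2 < p} 1/(n_1^3 n_2) \equiv 0 \pmod p; more generally every depth-2 multiple harmonic sum of weight 4 modulo p vanishes for p > 5: \sum_{0<n_1<n_2<p} n_1^{-a} n_2^{-b} \equiv 0 \pmod p whenever a + b = 4, a, b \ge 1. -/
/-!
The reflection `n ↦ p - n` maps `{0 < n₁ < n₂ < p}` to itself with the roles of `n₁` and `n₂`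
exchanged, so `H(a, b) = (-1)^(a+b) H(b, a)`. Multiplying out two power sums gives the shuffle
relation `H(a) H(b) = H(a, b) + H(b, a) + H(a + b)`, and `H(k) = ∑_{x ∈ 𝔽_p} x^k` vanishes for
`0 < k < p - 1`. For even weight `a + b < p - 1` this leaves `2 H(a, b) = 0` with `p` odd.
-/

open Finset

def powerHarmonicSum (p k : ℕ) : ZMod p := ∑ n ∈ Ico 1 p, ((n : ZMod p)⁻¹) ^ k

def doubleHarmonicSum (p a b : ℕ) : ZMod p :=
  ∑ n2 ∈ Ico 1 p, ∑ n1 ∈ Ico 1 n2, ((n1 : ZMod p)⁻¹) ^ a * ((n2 : ZMod p)⁻¹) ^ b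

theorem ZMod.sum_range_eq_sum_univ {n : ℕ} [NeZero n] {M : Type*} [AddCommMonoid M]
    (f : ZMod n → M) : ∑ i ∈ range n, f i = ∑ x, f x :=
  sum_nbij' (↑) ZMod.val (fun _ _ ↦ mem_univ _) (fun x _ ↦ mem_range.2 x.val_lt)
    (fun _ hi ↦ ZMod.val_cast_of_lt (mem_range.1 hi)) (fun x _ ↦ ZMod.natCast_zmod_val x)
    (fun _ _ ↦ rfl)

theorem ZMod.natCast_sub_of_le {p n : ℕ} (h : n ≤ p) : ((p - n : ℕ) : ZMod p) = -n := by
  rw [Nat.cast_sub h, ZMod.natCast_self, zero_sub]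

variable {p : ℕ}

theorem powerHarmonicSum_mul_powerHarmonicSum (a b : ℕ) :
    powerHarmonicSum p a * powerHarmonicSum p b =
      doubleHarmonicSum p a b + doubleHarmonicSum p b a + powerHarmonicSum p (a + b) := by
  have split : ∀ n2 ∈ Ico 1 p,
      ∑ n1 ∈ Ico 1 p, ((n1 : ZMod p)⁻¹) ^ a * ((n2 : ZMod p)⁻¹) ^ b =
        ∑ n1 ∈ Ico 1 n2, ((n1 : ZMod p)⁻¹) ^ a * ((n2 : ZMod p)⁻¹) ^ b
          + ((n2 : ZMod p)⁻¹) ^ (a + b)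
          + ∑ n1 ∈ Ico (n2 + 1) p, ((n1 : ZMod p)⁻¹) ^ a * ((n2 : ZMod p)⁻¹) ^ b := by
    intro n2 hn2
    rw [mem_Ico] at hn2
    rw [← sum_Ico_consecutive _ hn2.1 hn2.2.le, sum_eq_sum_Ico_succ_bot hn2.2, pow_add, add_assoc]
  have upper : ∑ n2 ∈ Ico 1 p, ∑ n1 ∈ Ico (n2 + 1) p,
      ((n1 : ZMod p)⁻¹) ^ a * ((n2 : ZMod p)⁻¹) ^ b = doubleHarmonicSum p b a := by
    rw [sum_Ico_Ico_comm']
    simp only [doubleHarmonicSum, mul_comm]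
  rw [powerHarmonicSum, powerHarmonicSum, sum_mul_sum, sum_comm, sum_congr rfl split,
    sum_add_distrib, sum_add_distrib, upper, add_right_comm]
  rfl

section Prime

variable [Fact p.Prime]

theorem powerHarmonicSum_eq_zero {k : ℕ} (hk0 : 0 < k) (hk : k < p - 1) :
    powerHarmonicSum p k = 0 :=
  calc powerHarmonicSum p k = ∑ n ∈ range p, ((n : ZMod p)⁻¹) ^ k := by
        rw [powerHarmonicSum, range_eq_Ico, sum_eq_sum_Ico_succ_bot (Fact.out : p.Prime).pos]
        simp [zero_pow hk0.ne']
    _ = ∑ x : ZMod p, x⁻¹ ^ k := ZMod.sum_range_eq_sum_univ (fun x ↦ x⁻¹ ^ k)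
    _ = ∑ x : ZMod p, x ^ k := Fintype.sum_bijective _ inv_involutive.bijective _ _ fun _ ↦ rfl
    _ = 0 := FiniteField.sum_pow_lt_card_sub_one _ _ (by rwa [ZMod.card])

theorem doubleHarmonicSum_eq_neg_one_pow_mul_swap (a b : ℕ) :
    doubleHarmonicSum p a b = (-1) ^ (a + b) * doubleHarmonicSum p b a := by
  rw [doubleHarmonicSum, doubleHarmonicSum, mul_sum, sum_sigma']
  simp_rw [mul_sum]
  rw [sum_sigma']
  refine sum_nbij' (fun x ↦ ⟨p - x.2, p - x.1⟩) (fun x ↦ ⟨p - x.2, p - x.1⟩) ?_ ?_ ?_ ?_ ?_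
  all_goals
    rintro ⟨n2, n1⟩ h
    simp only [mem_sigma, mem_Ico, Sigma.mk.injEq, heq_eq_eq] at h ⊢
  any_goals omega
  rw [ZMod.natCast_sub_of_le (n := n2) h.1.2.le, ZMod.natCast_sub_of_le (n := n1) (by omega),
    inv_neg, inv_neg, neg_pow, neg_pow]
  linear_combination (-((n1 : ZMod p)⁻¹ ^ a * (n2 : ZMod p)⁻¹ ^ b)) *
    (even_two_mul (a + b)).neg_one_pow (α := ZMod p)

theorem doubleHarmonicSum_eq_zero_of_even {a b : ℕ} (hw : Even (a + b)) (hw0 : 0 < a + b)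
    (hwp : a + b < p - 1) : doubleHarmonicSum p a b = 0 := by
  have hprod : powerHarmonicSum p a * powerHarmonicSum p b = 0 := by
    obtain ha | hb : 0 < a ∨ 0 < b := by omega
    · rw [powerHarmonicSum_eq_zero ha (by omega), zero_mul]
    · rw [powerHarmonicSum_eq_zero hb (by omega), mul_zero]
  have hswap : doubleHarmonicSum p b a = doubleHarmonicSum p a b := by
    rw [doubleHarmonicSum_eq_neg_one_pow_mul_swap, add_comm, hw.neg_one_pow, one_mul]
  have htwo : (2 : ZMod p) ≠ 0 := by
    intro h
    have := Nat.le_of_dvd two_pos ((ZMod.natCast_eq_zero_iff 2 p).1 (by exact_mod_cast h))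
    omega
  have hshuffle := powerHarmonicSum_mul_powerHarmonicSum (p := p) a b
  rw [hprod, hswap, powerHarmonicSum_eq_zero hw0 hwp] at hshuffle
  have hdouble : 2 * doubleHarmonicSum p a b = 0 := by linear_combination -hshuffle
  exact (mul_eq_zero.1 hdouble).resolve_left htwo

end Prime

theorem depth_two_weight_four_vanishes_general (p : ℕ) (hp : p.Prime) (hp5 : 5 < p)
    (a b : ℕ) (hab : a + b = 4) :
    ∑ n2 ∈ Ico 1 p, ∑ n1 ∈ Ico 1 n2,
      ((n1 : ZMod p)⁻¹) ^ a * ((n2 : ZMod p)⁻¹) ^ b = 0 := by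
  have : Fact p.Prime := ⟨hp⟩
  exact doubleHarmonicSum_eq_zero_of_even (by rw [hab]; decide) (by omega) (by omega)

theorem depth_two_weight_four_vanishes (p : ℕ) (hp : p.Prime) (hp5 : 5 < p)
    (a b : ℕ) (ha : 1 ≤ a) (hb : 1 ≤ b) (hab : a + b = 4) :
    ∑ n2 ∈ Ico 1 p, ∑ n1 ∈ Ico 1 n2,
      ((n1 : ZMod p)⁻¹) ^ a * ((n2 : ZMod p)⁻¹) ^ b = 0 :=
  depth_two_weight_four_vanishes_general p hp hp5 a b hab
end

section
/- For every prime p > 3, the identity \sum_{0<l_1,l_2<p, l_1+l_2 \ne p} t^{l_1+l_2}/(l_1(l_1+l_2)) = (1/2) (\sum_{0<l<p} t^l/l)^2 holds in (ZMod p)[t]. -/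
open Polynomial Finset

/-- The finite polylogarithm £₁(t) = ∑_{0<l<p} l⁻¹ tˡ in (ZMod p)[t]. -/
noncomputable def L1 (p : ℕ) : Polynomial (ZMod p) :=
  ∑ l ∈ Ico 1 p, C ((l : ZMod p)⁻¹) * X ^ l

/-- The finite multiple polylogarithm of Ono–Yamamoto type £^OY_{(1,1)}(t). -/
noncomputable def OY11 (p : ℕ) : Polynomial (ZMod p) :=
  ∑ l1 ∈ Ico 1 p, ∑ l2 ∈ Ico 1 p,
    if ¬ p ∣ (l1 + l2) then
      C ((l1 : ZMod p)⁻¹ * ((l1 + l2 : ℕ) : ZMod p)⁻¹) * X ^ (l1 + l2)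
    else 0

/-! Expanding `£₁(t)²` gives `∑ t^(l₁+l₂) / (l₁ l₂)`. Off the antidiagonal `l₁ + l₂ = p`, the
partial fraction `1/(l₁ l₂) = 1/(l₁ (l₁+l₂)) + 1/(l₂ (l₁+l₂))` splits this sum into `£^OY_{(1,1)}`
and its mirror image `l₁ ↔ l₂`. The antidiagonal contributes `-t^p ∑ l⁻²`, which vanishes because
`∑_{x ∈ 𝔽_p} x² = 0` for `p > 3`. -/

namespace ZMod

theorem sum_range_natCast {M : Type*} [AddCommMonoid M] (n : ℕ) [NeZero n] (f : ZMod n → M) :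
    ∑ l ∈ range n, f l = ∑ x : ZMod n, f x :=
  sum_nbij' (fun l => (l : ZMod n)) val (fun _ _ => mem_univ _)
    (fun x _ => mem_range.2 x.val_lt) (fun _ hl => val_cast_of_lt (mem_range.1 hl))
    (fun x _ => natCast_zmod_val x) (fun _ _ => rfl)

theorem natCast_ne_zero_of_mem_Ico {p l : ℕ} (hl : l ∈ Ico 1 p) : (l : ZMod p) ≠ 0 := by
  rw [Ne, natCast_eq_zero_iff]
  exact Nat.not_dvd_of_pos_of_lt (mem_Ico.1 hl).1 (mem_Ico.1 hl).2

variable {p : ℕ} [Fact p.Prime]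

theorem sum_inv_pow_eq_zero {k : ℕ} (hk : k < p - 1) : ∑ x : ZMod p, x⁻¹ ^ k = 0 := by
  rw [Fintype.sum_equiv (Equiv.inv (ZMod p)) (fun x => x⁻¹ ^ k) (· ^ k) fun _ => rfl]
  exact FiniteField.sum_pow_lt_card_sub_one (ZMod p) k (by rwa [card])

theorem sum_Ico_inv_pow_eq_zero {k : ℕ} (hk₀ : k ≠ 0) (hk : k < p - 1) :
    ∑ l ∈ Ico 1 p, ((l : ZMod p)⁻¹) ^ k = 0 := by
  rw [← sum_inv_pow_eq_zero hk, ← sum_range_natCast p (fun x => x⁻¹ ^ k), range_eq_Ico,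
    sum_eq_sum_Ico_succ_bot (Fact.out : p.Prime).pos]
  simp [hk₀]

end ZMod

theorem Nat.dvd_add_iff_add_eq_of_mem_Ico {p l m : ℕ} (hl : l ∈ Ico 1 p) (hm : m ∈ Ico 1 p) :
    p ∣ l + m ↔ l + m = p := by
  rw [mem_Ico] at hl hm
  exact ⟨fun h => Nat.eq_of_dvd_of_lt_two_mul (by omega) h (by omega), fun h => h ▸ dvd_rfl⟩

theorem sum_Ico_ite_dvd_add {M : Type*} [AddCommMonoid M] {p l : ℕ} (hl : l ∈ Ico 1 p)
    (f : ℕ → M) : ∑ m ∈ Ico 1 p, (if p ∣ l + m then f m else 0) = f (p - l) := by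
  have hpl : p - l ∈ Ico 1 p := by rw [mem_Ico] at hl ⊢; omega
  calc ∑ m ∈ Ico 1 p, (if p ∣ l + m then f m else 0)
      = ∑ m ∈ Ico 1 p, (if p - l = m then f m else 0) := by
        refine sum_congr rfl fun m hm => if_congr ?_ rfl rfl
        have hlp := (mem_Ico.1 hl).2
        rw [Nat.dvd_add_iff_add_eq_of_mem_Ico hl hm]
        omega
    _ = f (p - l) := by rw [sum_ite_eq, if_pos hpl]

theorem L1_sq (p : ℕ) : L1 p ^ 2 = ∑ l1 ∈ Ico 1 p, ∑ l2 ∈ Ico 1 p,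
    C ((l1 : ZMod p)⁻¹ * (l2 : ZMod p)⁻¹) * X ^ (l1 + l2) := by
  rw [sq, L1, sum_mul_sum]
  refine sum_congr rfl fun l1 _ => sum_congr rfl fun l2 _ => ?_
  rw [mul_mul_mul_comm, ← C_mul, ← pow_add]

theorem inv_mul_inv_eq_inv_mul_inv_add_add_inv_mul_inv_add {K : Type*} [Field K] {a b : K}
    (ha : a ≠ 0) (hb : b ≠ 0) (hab : a + b ≠ 0) :
    a⁻¹ * b⁻¹ = a⁻¹ * (a + b)⁻¹ + b⁻¹ * (a + b)⁻¹ := by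
  field_simp
  ring

section

variable {p : ℕ} [Fact p.Prime]

theorem C_inv_mul_inv_mul_X_pow_eq {l1 l2 : ℕ} (hl1 : l1 ∈ Ico 1 p) (hl2 : l2 ∈ Ico 1 p) :
    C ((l1 : ZMod p)⁻¹ * (l2 : ZMod p)⁻¹) * X ^ (l1 + l2) =
      (if ¬ p ∣ (l1 + l2) then
        C ((l1 : ZMod p)⁻¹ * ((l1 + l2 : ℕ) : ZMod p)⁻¹) * X ^ (l1 + l2) else 0) +
      (if ¬ p ∣ (l2 + l1) then
        C ((l2 : ZMod p)⁻¹ * ((l2 + l1 : ℕ) : ZMod p)⁻¹) * X ^ (l2 + l1) else 0) +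
      (if p ∣ l1 + l2 then C ((l1 : ZMod p)⁻¹ * (l2 : ZMod p)⁻¹) * X ^ (l1 + l2) else 0) := by
  rw [add_comm l2 l1]
  by_cases h : p ∣ l1 + l2
  · simp only [h, not_true_eq_false, if_false, if_true, zero_add]
  · have hsum : ((l1 : ZMod p) + l2) ≠ 0 := by
      rwa [← Nat.cast_add, Ne, ZMod.natCast_eq_zero_iff]
    simp only [h, not_false_eq_true, if_true, if_false, add_zero, Nat.cast_add]
    rw [← add_mul, ← C_add, inv_mul_inv_eq_inv_mul_inv_add_add_inv_mul_inv_add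
      (ZMod.natCast_ne_zero_of_mem_Ico hl1) (ZMod.natCast_ne_zero_of_mem_Ico hl2) hsum]

theorem sum_sum_ite_dvd_add_eq_zero (h3 : 3 < p) :
    ∑ l1 ∈ Ico 1 p, ∑ l2 ∈ Ico 1 p,
      (if p ∣ l1 + l2 then C ((l1 : ZMod p)⁻¹ * (l2 : ZMod p)⁻¹) * X ^ (l1 + l2) else 0) = 0 := by
  calc _ = ∑ l ∈ Ico 1 p, C (-(l : ZMod p)⁻¹ ^ 2) * X ^ p := by
        refine sum_congr rfl fun l hl => ?_
        have hlp : l ≤ p := (mem_Ico.1 hl).2.le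
        rw [sum_Ico_ite_dvd_add hl fun m => C ((l : ZMod p)⁻¹ * (m : ZMod p)⁻¹) * X ^ (l + m),
          Nat.add_sub_cancel' hlp, Nat.cast_sub hlp, ZMod.natCast_self, zero_sub, inv_neg,
          mul_neg, ← sq]
    _ = -C (∑ l ∈ Ico 1 p, (l : ZMod p)⁻¹ ^ 2) * X ^ p := by
        rw [map_sum, ← sum_mul, ← sum_neg_distrib]
        simp only [map_neg]
    _ = 0 := by
        rw [ZMod.sum_Ico_inv_pow_eq_zero two_ne_zero (by omega), map_zero, neg_zero, zero_mul]

theorem L1_sq_eq_two_mul_OY11 (h3 : 3 < p) : L1 p ^ 2 = 2 * OY11 p := by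
  rw [L1_sq, two_mul, sum_congr rfl fun _ hl1 => sum_congr rfl fun _ hl2 =>
    C_inv_mul_inv_mul_X_pow_eq hl1 hl2]
  simp only [sum_add_distrib]
  rw [sum_sum_ite_dvd_add_eq_zero h3, add_zero]
  exact congrArg (OY11 p + ·) sum_comm

end

theorem OY11_eq_half_L1_sq (p : ℕ) (hp : p.Prime) (h3 : 3 < p) :
    OY11 p = C ((2 : ZMod p)⁻¹) * (L1 p) ^ 2 := by
  have : Fact p.Prime := ⟨hp⟩
  have h2 : (2 : ZMod p) ≠ 0 :=
    mod_cast ZMod.natCast_ne_zero_of_mem_Ico (l := 2) (mem_Ico.2 ⟨one_le_two, by omega⟩)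
  rw [L1_sq_eq_two_mul_OY11 h3, ← map_ofNat C 2, ← mul_assoc, ← C_mul, inv_mul_cancel₀ h2, C_1,
    one_mul]
end

section
/- For every prime p > 3, the polynomial identity \sum_{0<l_1,l_2<p, p \nmid l_1+l_2} t^{l_1+l_2}/(l_1(l_1+l_2)) = \sum_{0<l_1,l_2<p, p \nmid l_1+l_2} (1-t)^{l_1+l_2}/(l_1(l_1+l_2)) holds in (ZMod p)[t]. -/
/-!
Put `£₁(t) = ∑_{0<l<p} t^l / l`. Symmetrizing in `(l₁, l₂)` and using
`1/l₁ + 1/l₂ = (l₁ + l₂)/(l₁ l₂)` shows that `2 £_{(1,1)}(t)` is `£₁(t)²` minus the terms with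
`l₁ + l₂ = p`, and these add up to `-t^p ∑ 1/l² = 0` because `p > 3`. So it suffices that
`£₁(1 - t) = £₁(t)`. By Frobenius both sides have derivative `(t^p - t)/(t(t - 1))`; as the
difference has degree `< p` it is constant, and at `t = 0` it is the harmonic sum `∑ 1/l = 0`.
-/

open Polynomial Finset

theorem Nat.dvd_iff_eq_of_lt_two_mul {n p : ℕ} (h0 : 0 < n) (h : n < 2 * p) :
    p ∣ n ↔ n = p := by
  refine ⟨fun ⟨k, hk⟩ => ?_, fun h => h ▸ dvd_rfl⟩
  subst hk
  obtain _ | _ | k := k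
  · simp at h0
  · simp
  · nlinarith

theorem geom_sum_mul_sub_one_mul_self {R : Type*} [CommRing R] {n : ℕ} (hn : n ≠ 0) (a : R) :
    (∑ k ∈ range (n - 1), a ^ k) * (a - 1) * a = a ^ n - a := by
  rw [geom_sum_mul, sub_mul, one_mul, ← pow_succ, Nat.sub_add_cancel (Nat.one_le_iff_ne_zero.2 hn)]

theorem ZMod.sum_range_natCast_s5 {M : Type*} [AddCommMonoid M] (p : ℕ) [NeZero p]
    (g : ZMod p → M) : ∑ l ∈ range p, g l = ∑ x : ZMod p, g x :=
  sum_nbij' (↑) ZMod.val (by simp) (by simp [ZMod.val_lt])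
    (fun _ hl => ZMod.val_cast_of_lt (mem_range.1 hl)) (fun x _ => ZMod.natCast_zmod_val x)
    (fun _ _ => rfl)

theorem Polynomial.eq_C_of_derivative_eq_zero_of_natDegree_lt {R : Type*} [CommSemiring R]
    [NoZeroDivisors R] {p : ℕ} [CharP R p] (hp : p ≠ 0) {f : R[X]} (hf : derivative f = 0)
    (hdeg : f.natDegree < p) : f = C (f.coeff 0) := by
  refine eq_C_of_natDegree_eq_zero ?_
  rw [← expand_contract p hf hp, natDegree_expand] at hdeg ⊢
  have : (contract p f).natDegree = 0 := by
    by_contra h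
    exact absurd hdeg (not_lt.2 (Nat.le_mul_of_pos_left p (Nat.pos_of_ne_zero h)))
  rw [this, zero_mul]

namespace FinitePolylog

variable {p : ℕ}

theorem natCast_ne_zero {l : ℕ} (h0 : 0 < l) (hlp : l < p) : (l : ZMod p) ≠ 0 := by
  rw [Ne, ZMod.natCast_eq_zero_iff]
  exact Nat.not_dvd_of_pos_of_lt h0 hlp

/-- The finite logarithm `£₁(q)`. -/
noncomputable def finiteLog (p : ℕ) (q : (ZMod p)[X]) : (ZMod p)[X] :=
  ∑ l ∈ Ico 1 p, C ((l : ZMod p)⁻¹) * q ^ l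

/-- The finite double polylogarithm `£^{OY}_{(1,1)}(q)`. -/
noncomputable def finitePolylog11 (p : ℕ) (q : (ZMod p)[X]) : (ZMod p)[X] :=
  ∑ l1 ∈ Ico 1 p, ∑ l2 ∈ Ico 1 p,
    if ¬ p ∣ (l1 + l2) then C ((l1 : ZMod p)⁻¹ * ((l1 + l2 : ℕ) : ZMod p)⁻¹) * q ^ (l1 + l2)
    else 0

variable [Fact p.Prime]

theorem sum_inv_pow_eq_zero {k : ℕ} (hk0 : 0 < k) (hkp : k < p - 1) :
    ∑ l ∈ Ico 1 p, ((l : ZMod p)⁻¹) ^ k = 0 := by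
  have hzero : ((0 : ℕ) : ZMod p)⁻¹ ^ k = 0 := by simp [hk0.ne']
  calc ∑ l ∈ Ico 1 p, ((l : ZMod p)⁻¹) ^ k
      = ∑ l ∈ range p, ((l : ZMod p)⁻¹) ^ k := by
        rw [range_eq_Ico, sum_eq_sum_Ico_succ_bot (Fact.out : p.Prime).pos, hzero, zero_add]
    _ = ∑ x : ZMod p, x⁻¹ ^ k := ZMod.sum_range_natCast_s5 p (fun x => x⁻¹ ^ k)
    _ = ∑ x : ZMod p, x ^ k :=
        Fintype.sum_bijective _ inv_involutive.bijective _ _ (fun _ => rfl)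
    _ = 0 := FiniteField.sum_pow_lt_card_sub_one (ZMod p) k (by rwa [ZMod.card])

theorem derivative_finiteLog (q : (ZMod p)[X]) :
    derivative (finiteLog p q) = (∑ k ∈ range (p - 1), q ^ k) * derivative q := by
  rw [finiteLog, derivative_sum, sum_Ico_eq_sum_range, sum_mul]
  refine sum_congr rfl fun k hk => ?_
  have hk : (((1 + k : ℕ) : ZMod p))⁻¹ * (1 + k : ℕ) = 1 :=
    inv_mul_cancel₀ (natCast_ne_zero (by omega) (by simp at hk; omega))
  rw [derivative_C_mul, derivative_pow, ← mul_assoc, ← mul_assoc, ← C_mul, hk, C_1, one_mul,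
    Nat.add_sub_cancel_left]

theorem natDegree_finiteLog_lt {q : (ZMod p)[X]} (hq : q.natDegree ≤ 1) :
    (finiteLog p q).natDegree < p := by
  refine Nat.lt_of_le_pred (Fact.out : p.Prime).pos
    (natDegree_sum_le_of_forall_le _ _ fun l hl => ?_)
  refine (natDegree_C_mul_le _ _).trans (natDegree_pow_le.trans ?_)
  have := Nat.mul_le_mul_left l hq
  rw [mem_Ico] at hl
  rw [Nat.pred_eq_sub_one]
  omega

theorem geom_sum_X_add_geom_sum_one_sub_X :
    ∑ k ∈ range (p - 1), (X : (ZMod p)[X]) ^ k + ∑ k ∈ range (p - 1), (1 - X) ^ k = 0 := by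
  have hp : p ≠ 0 := (Fact.out : p.Prime).ne_zero
  have hX := geom_sum_mul_sub_one_mul_self hp (X : (ZMod p)[X])
  have hY := geom_sum_mul_sub_one_mul_self hp (1 - X : (ZMod p)[X])
  rw [sub_pow_char, one_pow] at hY
  have hXX : (X * (X - 1) : (ZMod p)[X]) ≠ 0 := mul_ne_zero X_ne_zero (X_sub_C_ne_zero 1)
  refine (mul_eq_zero.1 ?_).resolve_left hXX
  linear_combination hX + hY

theorem finiteLog_one_sub_X (hp : p ≠ 2) : finiteLog p (1 - X) = finiteLog p X := by
  set D := finiteLog p (1 - X) - finiteLog p X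
  have hD : derivative D = 0 := by
    rw [derivative_sub, derivative_finiteLog, derivative_finiteLog, derivative_sub, derivative_one,
      derivative_X]
    linear_combination (-1 : (ZMod p)[X]) * (geom_sum_X_add_geom_sum_one_sub_X (p := p))
  have hdeg : D.natDegree < p := by
    have h1X : (1 - X : (ZMod p)[X]).natDegree ≤ 1 :=
      (natDegree_sub_le _ _).trans (by simp)
    exact (natDegree_sub_le _ _).trans_lt
      (max_lt (natDegree_finiteLog_lt h1X) (natDegree_finiteLog_lt natDegree_X_le))
  have hD0 : D.coeff 0 = 0 := by
    have h2p : 2 < p := (Fact.out : p.Prime).two_le.lt_of_ne' hp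
    have hX : (finiteLog p X).eval 0 = 0 := by
      simp only [finiteLog, eval_finsetSum, eval_mul, eval_C, eval_pow, eval_X]
      exact sum_eq_zero fun l hl => by rw [zero_pow (by rw [mem_Ico] at hl; omega), mul_zero]
    have h1X : (finiteLog p (1 - X)).eval 0 = ∑ l ∈ Ico 1 p, ((l : ZMod p)⁻¹) ^ 1 := by
      simp [finiteLog, eval_finsetSum]
    rw [coeff_zero_eq_eval_zero, eval_sub, hX, h1X, sum_inv_pow_eq_zero one_pos (by omega),
      sub_zero]
  have hDC := eq_C_of_derivative_eq_zero_of_natDegree_lt (Fact.out : p.Prime).ne_zero hD hdeg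
  rw [hD0, C_0] at hDC
  exact sub_eq_zero.1 hDC

theorem sq_finiteLog (q : (ZMod p)[X]) :
    finiteLog p q ^ 2 = ∑ l1 ∈ Ico 1 p, ∑ l2 ∈ Ico 1 p,
      C ((l1 : ZMod p)⁻¹ * (l2 : ZMod p)⁻¹) * q ^ (l1 + l2) := by
  rw [finiteLog, sq, sum_mul_sum]
  refine sum_congr rfl fun _ _ => sum_congr rfl fun _ _ => ?_
  rw [C_mul, pow_add]
  ring

theorem sum_sum_ite_dvd_add_eq_zero (h3 : 3 < p) (q : (ZMod p)[X]) :
    ∑ l1 ∈ Ico 1 p, ∑ l2 ∈ Ico 1 p, (if p ∣ l1 + l2 then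
      C ((l1 : ZMod p)⁻¹ * (l2 : ZMod p)⁻¹) * q ^ (l1 + l2) else 0) = 0 := by
  calc _ = ∑ l ∈ Ico 1 p, C ((l : ZMod p)⁻¹ * ((p - l : ℕ) : ZMod p)⁻¹) * q ^ p := by
        refine sum_congr rfl fun l1 hl1 => ?_
        rw [mem_Ico] at hl1
        have hdvd : ∀ l2 ∈ Ico 1 p, p ∣ l1 + l2 ↔ p - l1 = l2 := fun l2 hl2 => by
          rw [mem_Ico] at hl2
          rw [Nat.dvd_iff_eq_of_lt_two_mul (by omega) (by omega)]
          omega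
        rw [sum_congr rfl fun l2 hl2 => if_congr (hdvd l2 hl2) rfl rfl, sum_ite_eq,
          if_pos (by rw [mem_Ico]; omega), Nat.add_sub_cancel' hl1.2.le]
    _ = C (-∑ l ∈ Ico 1 p, ((l : ZMod p)⁻¹) ^ 2) * q ^ p := by
        rw [← sum_mul, ← map_sum, ← sum_neg_distrib]
        refine congrArg (fun c => C c * q ^ p) (sum_congr rfl fun l hl => ?_)
        rw [Nat.cast_sub (mem_Ico.1 hl).2.le, ZMod.natCast_self, zero_sub, inv_neg]
        ring
    _ = 0 := by rw [sum_inv_pow_eq_zero two_pos (by omega), neg_zero, C_0, zero_mul]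

theorem two_mul_finitePolylog11 (h3 : 3 < p) (q : (ZMod p)[X]) :
    2 * finitePolylog11 p q = finiteLog p q ^ 2 := by
  rw [sq_finiteLog, ← add_zero (2 * _), ← sum_sum_ite_dvd_add_eq_zero h3 q, two_mul]
  nth_rw 2 [finitePolylog11]
  rw [sum_comm, finitePolylog11, ← sum_add_distrib, ← sum_add_distrib]
  refine sum_congr rfl fun l1 hl1 => ?_
  rw [← sum_add_distrib, ← sum_add_distrib]
  refine sum_congr rfl fun l2 hl2 => ?_
  rw [mem_Ico] at hl1 hl2
  by_cases h : p ∣ l1 + l2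
  · simp [h, add_comm l2 l1]
  · have h' : ¬ p ∣ l2 + l1 := by rwa [add_comm]
    have hs : ((l1 + l2 : ℕ) : ZMod p) ≠ 0 := by rwa [Ne, ZMod.natCast_eq_zero_iff]
    have h1 := natCast_ne_zero (p := p) hl1.1 hl1.2
    have h2 := natCast_ne_zero (p := p) hl2.1 hl2.2
    rw [if_pos h, if_pos h', if_neg h, add_zero, add_comm l2 l1, ← add_mul, ← C_add]
    congr 2
    field_simp
    push_cast
    ring

end FinitePolylog

open FinitePolylog in
theorem OY11_functional_equation (p : ℕ) (hp : p.Prime) (h3 : 3 < p) :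
    (∑ l1 ∈ Ico 1 p, ∑ l2 ∈ Ico 1 p,
      if ¬ p ∣ (l1 + l2) then
        C ((l1 : ZMod p)⁻¹ * ((l1 + l2 : ℕ) : ZMod p)⁻¹) * X ^ (l1 + l2)
      else 0)
    = ∑ l1 ∈ Ico 1 p, ∑ l2 ∈ Ico 1 p,
      if ¬ p ∣ (l1 + l2) then
        C ((l1 : ZMod p)⁻¹ * ((l1 + l2 : ℕ) : ZMod p)⁻¹) * (1 - X) ^ (l1 + l2)
      else 0 := by
  have : Fact p.Prime := ⟨hp⟩
  change finitePolylog11 p X = finitePolylog11 p (1 - X)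
  have h2 : (2 : (ZMod p)[X]) ≠ 0 :=
    Ring.two_ne_zero (by rw [ringChar.eq (ZMod p)[X] p]; omega)
  refine mul_left_cancel₀ h2 ?_
  rw [two_mul_finitePolylog11 h3, two_mul_finitePolylog11 h3, finiteLog_one_sub_X (by omega)]
end

section
/- For every prime p > 3, ζ^{(2)}(1,2) = -ζ(1,2) in ZMod p, where ζ(1,2) = \sum_{0<l_1,l_2<p, l_1+l_2<p} l_1^{-1}(l_1+l_2)^{-2} and ζ^{(2)}(1,2) = \sum_{0<l_1,l_2<p, l_1+l_2>p} l_1^{-1}(l_1+l_2)^{-2} (note l_1+l_2 \ne p in the second sum is automatic only if we restrict to l_1+l_2 not divisible by p). -/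
open Finset

/- The substitution `(l₁, l₂) ↦ (p - l₁, p - l₂)` swaps the two ranges `l₁ + l₂ < p` and
`p < l₁ + l₂`, and negates `l₁` and `l₁ + l₂` modulo `p`; the summand is odd of weight 3. -/

theorem ZMod.natCast_self_sub {n a : ℕ} (h : a ≤ n) : ((n - a : ℕ) : ZMod n) = -a := by
  rw [Nat.cast_sub h, ZMod.natCast_self, zero_sub]

theorem sum_Ico_Ico_reflect {M : Type*} [AddCommMonoid M] (n : ℕ) (g : ℕ → ℕ → M) :
    ∑ a ∈ Ico 1 n, ∑ b ∈ Ico 1 n, g (n - a) (n - b) = ∑ a ∈ Ico 1 n, ∑ b ∈ Ico 1 n, g a b := by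
  have hIco : Ico (n + 1 - n) (n + 1 - 1) = Ico 1 n := by
    rw [Nat.add_sub_cancel_left, Nat.add_sub_cancel]
  simp only [sum_Ico_reflect _ 1 (Nat.le_succ n), hIco]
  rw [sum_Ico_reflect (fun a => ∑ b ∈ Ico 1 n, g a b) 1 (Nat.le_succ n), hIco]

theorem sum_Ico_Ico_gt_eq_sum_lt_neg {M : Type*} [AddCommMonoid M] (n : ℕ)
    (f : ZMod n → ZMod n → M) :
    ∑ a ∈ Ico 1 n, ∑ b ∈ Ico 1 n, (if n < a + b then f a ((a + b : ℕ) : ZMod n) else 0) =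
      ∑ a ∈ Ico 1 n, ∑ b ∈ Ico 1 n,
        if a + b < n then f (-a) (-((a + b : ℕ) : ZMod n)) else 0 := by
  rw [← sum_Ico_Ico_reflect n]
  refine sum_congr rfl fun a ha => sum_congr rfl fun b hb => ?_
  rw [mem_Ico] at ha hb
  have hcond : n < n - a + (n - b) ↔ a + b < n := by omega
  have hsum : ((n - a + (n - b) : ℕ) : ZMod n) = -((a + b : ℕ) : ZMod n) := by
    rw [Nat.cast_add, ZMod.natCast_self_sub ha.2.le, ZMod.natCast_self_sub hb.2.le,
      Nat.cast_add, neg_add]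
  simp only [hcond, hsum, ZMod.natCast_self_sub ha.2.le]

theorem zeta2_12_eq_neg_zeta_12_general (p : ℕ) (hp : p.Prime) :
    (∑ l1 ∈ Ico 1 p, ∑ l2 ∈ Ico 1 p,
      if p < l1 + l2 then (l1 : ZMod p)⁻¹ * (((l1 + l2 : ℕ) : ZMod p)⁻¹) ^ 2 else 0)
    = - ∑ l1 ∈ Ico 1 p, ∑ l2 ∈ Ico 1 p,
        if l1 + l2 < p then (l1 : ZMod p)⁻¹ * (((l1 + l2 : ℕ) : ZMod p)⁻¹) ^ 2 else 0 := by
  have := Fact.mk hp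
  rw [sum_Ico_Ico_gt_eq_sum_lt_neg p fun x y => x⁻¹ * (y⁻¹) ^ 2]
  simp only [inv_neg, neg_sq, neg_mul, ← sum_neg_distrib, neg_ite, neg_zero]

theorem zeta2_12_eq_neg_zeta_12 (p : ℕ) (hp : p.Prime) (h3 : 3 < p) :
    (∑ l1 ∈ Ico 1 p, ∑ l2 ∈ Ico 1 p,
      if p < l1 + l2 then (l1 : ZMod p)⁻¹ * (((l1 + l2 : ℕ) : ZMod p)⁻¹) ^ 2 else 0)
    = - ∑ l1 ∈ Ico 1 p, ∑ l2 ∈ Ico 1 p,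
        if l1 + l2 < p then (l1 : ZMod p)⁻¹ * (((l1 + l2 : ℕ) : ZMod p)⁻¹) ^ 2 else 0 :=
  zeta2_12_eq_neg_zeta_12_general p hp
end

section
/- For every prime p > 5, ζ^{(2)}(1,1,1) := \sum_{0<l_1,l_2,l_3<p, p<l_1+l_2+l_3<2p, all partial sums prime to p} (l_1(l_1+l_2)(l_1+l_2+l_3))^{-1} \equiv 0 \pmod p. -/
/-!
The reflection `lᵢ ↦ p - lᵢ` is an involution of `{1, …, p-1}³` that sends the partial sums
`l₁, l₁ + l₂, l₁ + l₂ + l₃` to `p - l₁, 2p - (l₁ + l₂), 3p - (l₁ + l₂ + l₃)`, so it preserves the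
range condition `p < l₁ + l₂ + l₃ < 2p` and negates each of the three inverses, hence the summand.
Its fixed points have `l₁ + l₂ = p` and contribute zero, so the terms cancel in pairs.
-/

open Finset

section CharP

variable {K : Type*} [Field K] (p : ℕ) [CharP K p]

lemma CharP.natCast_mul_sub {k x : ℕ} (h : x ≤ k * p) : ((k * p - x : ℕ) : K) = -x := by
  simp [Nat.cast_sub h]

/-- The summand of `ζ^{(2)}(1,1,1)` without the coprimality conditions, which are redundant
because `0⁻¹ = 0`. -/
def zeta2Summand (l₁ l₂ l₃ : ℕ) : K :=
  if p < l₁ + l₂ + l₃ ∧ l₁ + l₂ + l₃ < 2 * p then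
    (l₁ : K)⁻¹ * ((l₁ + l₂ : ℕ) : K)⁻¹ * ((l₁ + l₂ + l₃ : ℕ) : K)⁻¹
  else 0

lemma ite_coprime_eq_zeta2Summand (l₁ l₂ l₃ : ℕ) :
    (if p < l₁ + l₂ + l₃ ∧ l₁ + l₂ + l₃ < 2 * p ∧ ¬ p ∣ l₁ ∧ ¬ p ∣ (l₁ + l₂)
        ∧ ¬ p ∣ (l₁ + l₂ + l₃) then
      (l₁ : K)⁻¹ * ((l₁ + l₂ : ℕ) : K)⁻¹ * ((l₁ + l₂ + l₃ : ℕ) : K)⁻¹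
    else 0) = zeta2Summand p l₁ l₂ l₃ := by
  unfold zeta2Summand
  by_cases hrange : p < l₁ + l₂ + l₃ ∧ l₁ + l₂ + l₃ < 2 * p
  · by_cases hcop : ¬ p ∣ l₁ ∧ ¬ p ∣ (l₁ + l₂) ∧ ¬ p ∣ (l₁ + l₂ + l₃)
    · rw [if_pos ⟨hrange.1, hrange.2, hcop⟩, if_pos hrange]
    · rw [if_neg fun h ↦ hcop h.2.2, if_pos hrange]
      simp only [not_and_or, not_not, ← CharP.cast_eq_zero_iff K p] at hcop
      rcases hcop with h | h | h <;> simp [h]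
  · rw [if_neg fun h ↦ hrange ⟨h.1, h.2.1⟩, if_neg hrange]

lemma zeta2Summand_reflect {l₁ l₂ l₃ : ℕ} (h₁ : l₁ ≤ p) (h₂ : l₂ ≤ p) (h₃ : l₃ ≤ p) :
    zeta2Summand (K := K) p (p - l₁) (p - l₂) (p - l₃) = -zeta2Summand p l₁ l₂ l₃ := by
  have e₁ : p - l₁ = 1 * p - l₁ := by omega
  have e₂ : p - l₁ + (p - l₂) = 2 * p - (l₁ + l₂) := by omega
  have e₃ : p - l₁ + (p - l₂) + (p - l₃) = 3 * p - (l₁ + l₂ + l₃) := by omega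
  have hrange : p < p - l₁ + (p - l₂) + (p - l₃) ∧ p - l₁ + (p - l₂) + (p - l₃) < 2 * p ↔
      p < l₁ + l₂ + l₃ ∧ l₁ + l₂ + l₃ < 2 * p := by omega
  simp only [zeta2Summand, hrange]
  split_ifs
  · rw [e₃, e₂, e₁, CharP.natCast_mul_sub p (by omega), CharP.natCast_mul_sub p (by omega),
      CharP.natCast_mul_sub p (by omega)]
    simp only [inv_neg]
    ring
  · exact neg_zero.symm

lemma zeta2Summand_of_add_eq {l₁ l₂ : ℕ} (l₃ : ℕ) (h : l₁ + l₂ = p) :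
    zeta2Summand (K := K) p l₁ l₂ l₃ = 0 := by
  simp [zeta2Summand, h]

lemma sum_zeta2Summand_eq_zero :
    ∑ l ∈ Ico 1 p ×ˢ Ico 1 p ×ˢ Ico 1 p, zeta2Summand (K := K) p l.1 l.2.1 l.2.2 = 0 := by
  refine sum_involution (fun l _ ↦ (p - l.1, p - l.2.1, p - l.2.2)) ?_ ?_ ?_ ?_ <;>
    rintro ⟨l₁, l₂, l₃⟩ hl <;> simp only [mem_product, mem_Ico] at hl ⊢
  · rw [zeta2Summand_reflect p (by omega) (by omega) (by omega), add_neg_cancel]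
  · intro hne hfix
    simp only [Prod.mk.injEq] at hfix
    exact hne (zeta2Summand_of_add_eq p l₃ (by omega))
  · omega
  · simp only [Prod.mk.injEq]
    omega

end CharP

theorem zeta2_111_vanishes_general (p : ℕ) (hp : p.Prime) :
    ∑ l1 ∈ Ico 1 p, ∑ l2 ∈ Ico 1 p, ∑ l3 ∈ Ico 1 p,
      (if p < l1 + l2 + l3 ∧ l1 + l2 + l3 < 2 * p ∧ ¬ p ∣ l1 ∧ ¬ p ∣ (l1 + l2)
          ∧ ¬ p ∣ (l1 + l2 + l3) then
        (l1 : ZMod p)⁻¹ * ((l1 + l2 : ℕ) : ZMod p)⁻¹ * ((l1 + l2 + l3 : ℕ) : ZMod p)⁻¹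
      else 0) = 0 := by
  have : Fact p.Prime := ⟨hp⟩
  simp only [ite_coprime_eq_zeta2Summand]
  simpa only [sum_product] using sum_zeta2Summand_eq_zero (K := ZMod p) p

theorem zeta2_111_vanishes (p : ℕ) (hp : p.Prime) (h5 : 5 < p) :
    ∑ l1 ∈ Ico 1 p, ∑ l2 ∈ Ico 1 p, ∑ l3 ∈ Ico 1 p,
      (if p < l1 + l2 + l3 ∧ l1 + l2 + l3 < 2 * p ∧ ¬ p ∣ l1 ∧ ¬ p ∣ (l1 + l2)
          ∧ ¬ p ∣ (l1 + l2 + l3) then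
        (l1 : ZMod p)⁻¹ * ((l1 + l2 : ℕ) : ZMod p)⁻¹ * ((l1 + l2 + l3 : ℕ) : ZMod p)⁻¹
      else 0) = 0 :=
  zeta2_111_vanishes_general p hp
end
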